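/- Let A be an algebra and R, S, T, U reflexive compatible binary relations on A. Then [R, S∘T∘U|1] ⊆ ((R⁻∘R) ∩ (S ∘ (T ∩ (R⁻ ∘ (T ∩ (S⁻∘U⁻)) ∘ R)) ∘ U))*. -/

import Mathlib

/-! Let `(x, x; z, w) ∈ M(R, S ∘ T ∘ U)` be witnessed by a term `t`, tuples `a R a'` and
`b S c T d U b'`, so `x = t(a, b) = t(a, b')`, `z = t(a', b)`, `w = t(a', b')`. Evaluating `t`
at the intermediate tuples and using compatibility and reflexivity coordinatewise gives
`z R⁻ x R w` and the chain `z S t(a', c) T t(a', d) U w`, whose middle step also factors as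
`t(a', c) R⁻ t(a, c) (T ∩ S⁻ ∘ U⁻) t(a, d) R t(a', d)` through `x`. Hence every generator of
`[R, S ∘ T ∘ U | 1]` lies in the relation on the right, and so does the transitive closure. -/

open FirstOrder Language

universe u

/-- A binary relation on a structure `A` is compatible (admissible) if it is preserved
by every operation (function symbol) of the language. -/
def Compatible (L : Language) {A : Type u} [L.Structure A] (R : A → A → Prop) : Prop :=
  ∀ (n : ℕ) (f : L.Functions n) (a b : Fin n → A),
    (∀ i, R (a i) (b i)) → R (Structure.funMap f a) (Structure.funMap f b)

/-- `(x, y; z, w) ∈ M(R, S)`: there is a term `t` and tuples `a R a'`, `b S b'` with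
`x = t(a,b)`, `y = t(a,b')`, `z = t(a',b)`, `w = t(a',b')`. -/
def InM (L : Language) {A : Type u} [L.Structure A] (R S : A → A → Prop)
    (x y z w : A) : Prop :=
  ∃ (n m : ℕ) (t : L.Term (Fin n ⊕ Fin m)) (a a' : Fin n → A) (b b' : Fin m → A),
    (∀ i, R (a i) (a' i)) ∧ (∀ j, S (b j) (b' j)) ∧
      x = t.realize (Sum.elim a b) ∧ y = t.realize (Sum.elim a b') ∧
      z = t.realize (Sum.elim a' b) ∧ w = t.realize (Sum.elim a' b')

/-- `[R, S | 1]`: the transitive closure of `{(z,w) : (x,x;z,w) ∈ M(R,S) for some x}`. -/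
def comm1 (L : Language) {A : Type u} [L.Structure A] (R S : A → A → Prop) :
    A → A → Prop :=
  Relation.TransGen (fun z w => ∃ x, InM L R S x x z w)

/-- Relational composition. -/
def rcomp {A : Type u} (R S : A → A → Prop) : A → A → Prop :=
  fun a c => ∃ b, R a b ∧ S b c

/-- Converse of a relation. -/
def rconv {A : Type u} (R : A → A → Prop) : A → A → Prop := fun a b => R b a

/-- Intersection of relations. -/
def rinter {A : Type u} (R S : A → A → Prop) : A → A → Prop := fun a b => R a b ∧ S a b

/-- A congruence: a compatible equivalence relation. -/
def IsCongruence (L : Language) {A : Type u} [L.Structure A] (θ : A → A → Prop) : Prop :=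
  Equivalence θ ∧ Compatible L θ

/-- A tolerance: a reflexive symmetric compatible relation. -/
def IsTolerance (L : Language) {A : Type u} [L.Structure A] (T : A → A → Prop) : Prop :=
  Reflexive T ∧ Symmetric T ∧ Compatible L T

/-- `Cg R`: the smallest congruence containing `R` (intersection of all congruences ⊇ R). -/
def Cg (L : Language) {A : Type u} [L.Structure A] (R : A → A → Prop) : A → A → Prop :=
  fun a b => ∀ θ : A → A → Prop, IsCongruence L θ → (∀ x y, R x y → θ x y) → θ a b

/-- `R°`: the smallest tolerance containing `R`. -/
def tolC (L : Language) {A : Type u} [L.Structure A] (R : A → A → Prop) : A → A → Prop :=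
  fun a b => ∀ T : A → A → Prop, IsTolerance L T → (∀ x y, R x y → T x y) → T a b

/-- `K(R,S;V) = {(z,w) : ∃ x y, (x,y;z,w) ∈ M(R,S) ∧ x V y}`. -/
def Kop (L : Language) {A : Type u} [L.Structure A] (R S V : A → A → Prop) :
    A → A → Prop :=
  fun z w => ∃ x y, InM L R S x y z w ∧ V x y

/-- The join `γ ∨ D`: the smallest congruence containing both `γ` and `D`. -/
def cgJoin (L : Language) {A : Type u} [L.Structure A] (γ D : A → A → Prop) :
    A → A → Prop :=
  fun a b => ∀ θ : A → A → Prop, IsCongruence L θ → (∀ x y, γ x y → θ x y) →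
    (∀ x y, D x y → θ x y) → θ a b

variable {L : Language} {A : Type u} [L.Structure A]

namespace Compatible

variable {R : A → A → Prop}

theorem realize (hR : Compatible L R) {α : Type*} (t : L.Term α) {v v' : α → A}
    (h : ∀ i, R (v i) (v' i)) : R (t.realize v) (t.realize v') := by
  induction t with
  | var i => exact h i
  | func f ts ih => exact hR _ f _ _ ih

theorem realize_sumElim (hR : Compatible L R) {β γ : Type*} (t : L.Term (β ⊕ γ))
    {a a' : β → A} {b b' : γ → A} (ha : ∀ i, R (a i) (a' i)) (hb : ∀ j, R (b j) (b' j)) :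
    R (t.realize (Sum.elim a b)) (t.realize (Sum.elim a' b')) :=
  hR.realize t fun | .inl i => ha i | .inr j => hb j

end Compatible

theorem InM.rel_of_diag_rcomp_rcomp {R S T U : A → A → Prop}
    (hRrefl : Reflexive R) (hSrefl : Reflexive S) (hTrefl : Reflexive T) (hUrefl : Reflexive U)
    (hRc : Compatible L R) (hSc : Compatible L S) (hTc : Compatible L T) (hUc : Compatible L U)
    {x z w : A} (h : InM L R (rcomp S (rcomp T U)) x x z w) :
    rinter (rcomp (rconv R) R)
      (rcomp S
        (rcomp (rinter T (rcomp (rconv R)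
                 (rcomp (rinter T (rcomp (rconv S) (rconv U))) R)))
          U)) z w := by
  obtain ⟨n, m, t, a, a', b, b', ha, hb, hxb, hxb', rfl, rfl⟩ := h
  choose c hbc d hcd hdb' using hb
  let τ (u : Fin n → A) (v : Fin m → A) : A := t.realize (Sum.elim u v)
  have hR : ∀ v, R (τ a v) (τ a' v) := fun v => hRc.realize_sumElim t ha fun _ => hRrefl _
  have hS : ∀ u, S (τ u b) (τ u c) := fun u => hSc.realize_sumElim t (fun _ => hSrefl _) hbc
  have hT : ∀ u, T (τ u c) (τ u d) := fun u => hTc.realize_sumElim t (fun _ => hTrefl _) hcd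
  have hU : ∀ u, U (τ u d) (τ u b') := fun u => hUc.realize_sumElim t (fun _ => hUrefl _) hdb'
  exact ⟨⟨x, hxb ▸ hR b, hxb' ▸ hR b'⟩, τ a' c, hS a', τ a' d,
    ⟨hT a', τ a c, hR c, τ a d, ⟨hT a, x, hxb ▸ hS a, hxb' ▸ hU a⟩, hR d⟩, hU a'⟩

theorem stmt9 (R S T U : A → A → Prop)
    (hRrefl : Reflexive R) (hSrefl : Reflexive S) (hTrefl : Reflexive T) (hUrefl : Reflexive U)
    (hRc : Compatible L R) (hSc : Compatible L S) (hTc : Compatible L T) (hUc : Compatible L U) :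
    ∀ a b, comm1 L R (rcomp S (rcomp T U)) a b →
      Relation.TransGen
        (rinter (rcomp (rconv R) R)
          (rcomp S
            (rcomp (rinter T (rcomp (rconv R)
                     (rcomp (rinter T (rcomp (rconv S) (rconv U))) R)))
              U))) a b :=
  Relation.TransGen.mono fun _ _ ⟨_, h⟩ =>
    h.rel_of_diag_rcomp_rcomp hRrefl hSrefl hTrefl hUrefl hRc hSc hTc hUc
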